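/- Let η be a norm on ℝ², let A be a point of the unit η-circle, and let w ∈ [0, 2π(η)). For every finite sequence of points contained in cone(A, w), there exists a wake-up tree rooted at the origin spanning these points whose makespan (in the η-norm) is at most 1 + φ·w, where φ = (1+√5)/2 is the golden ratio. -/
import Mathlib


/-- Binary trees with labeled nodes. A wake-up tree with source `s` is modeled by the
subtree hanging at the unique child of the root (the root itself is labeled `s`). -/
inductive BTree (α : Type) where
  | nil : BTree α
  | node : α → BTree α → BTree α → BTree α

namespace BTree
/-- The multiset of labels of a binary tree. -/
def labels {α : Type} : BTree α → Multiset α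
  | .nil => 0
  | .node p l r => p ::ₘ (labels l + labels r)
end BTree

/-- `η` is a norm on `ℝ²`. -/
def IsNorm (η : ℝ × ℝ → ℝ) : Prop :=
  (∀ x, η x = 0 ↔ x = 0) ∧
  (∀ (a : ℝ) (x : ℝ × ℝ), η (a • x) = |a| * η x) ∧
  (∀ x y : ℝ × ℝ, η (x + y) ≤ η x + η y)

/-- The makespan of a wake-up tree: maximum total η-edge-length of a root-to-leaf path,
where the previous (parent) position is `s`. -/
noncomputable def makespan (η : ℝ × ℝ → ℝ) : ℝ × ℝ → BTree (ℝ × ℝ) → ℝ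
  | _, .nil => 0
  | s, .node p l r => η (p - s) + max (makespan η p l) (makespan η p r)

/-- `γₙ(η)`: sup over sequences of `n` points in the closed unit η-ball of the minimum
makespan of a wake-up tree rooted at the origin spanning them. -/
noncomputable def gammaN (η : ℝ × ℝ → ℝ) (n : ℕ) : ℝ :=
  sSup { m : ℝ | ∃ ps : List (ℝ × ℝ), ps.length = n ∧ (∀ p ∈ ps, η p ≤ 1) ∧
    m = sInf { t : ℝ | ∃ T : BTree (ℝ × ℝ), T.labels = ↑ps ∧ makespan η 0 T = t } }

/-- The wake-up ratio `γ(η) = sup_n γₙ(η)`. -/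
noncomputable def gamma (η : ℝ × ℝ → ℝ) : ℝ := sSup (Set.range (gammaN η))

/-- The ℓ1-norm on ℝ². -/
noncomputable def l1 (p : ℝ × ℝ) : ℝ := |p.1| + |p.2|
/-- η-variation (intrinsic length) of the curve `g` on `[a,b]`: sup over partitions. -/
noncomputable def etaVar (η : ℝ × ℝ → ℝ) (g : ℝ → ℝ × ℝ) (a b : ℝ) : ℝ :=
  sSup { L : ℝ | ∃ (m : ℕ) (θ : ℕ → ℝ), Monotone θ ∧ θ 0 = a ∧ θ m = b ∧
    L = ∑ i ∈ Finset.range m, η (g (θ (i + 1)) - g (θ i)) }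

/-- The point of the unit η-circle in direction of angle `θ`. -/
noncomputable def unitPoint (η : ℝ × ℝ → ℝ) (θ : ℝ) : ℝ × ℝ :=
  (η (Real.cos θ, Real.sin θ))⁻¹ • ((Real.cos θ, Real.sin θ) : ℝ × ℝ)

/-- `π(η)`: half the intrinsic length of the unit η-circle. -/
noncomputable def piEta (η : ℝ × ℝ → ℝ) : ℝ :=
  etaVar η (unitPoint η) 0 (2 * Real.pi) / 2

/-- `cone(A, w)` where `A = unitPoint η α`: union of segments `[O, X]` over points `X` of the
unit circle whose anticlockwise arc from `A` has length at most `w`. -/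
def cone (η : ℝ × ℝ → ℝ) (α w : ℝ) : Set (ℝ × ℝ) :=
  { x | ∃ θ t : ℝ, α ≤ θ ∧ etaVar η (unitPoint η) α θ ≤ w ∧
        0 ≤ t ∧ t ≤ 1 ∧ x = t • unitPoint η θ }


namespace FTPAux

variable {η : ℝ × ℝ → ℝ}

lemma eta_neg (hη : IsNorm η) (x : ℝ × ℝ) : η (-x) = η x := by
  have h := hη.2.1 (-1) x
  rw [neg_one_smul] at h
  simpa using h

lemma eta_nonneg (hη : IsNorm η) (x : ℝ × ℝ) : 0 ≤ η x := by
  have h0 : η 0 = 0 := (hη.1 0).mpr rfl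
  have hx : x + -x = 0 := add_neg_cancel x
  have htri := hη.2.2 x (-x)
  rw [hx, h0, eta_neg hη] at htri
  linarith

lemma eta_abs_sub (hη : IsNorm η) (x y : ℝ × ℝ) : |η x - η y| ≤ η (x - y) := by
  rw [abs_sub_le_iff]
  constructor
  · have h := hη.2.2 (x - y) y
    have e : x - y + y = x := by abel
    rw [e] at h
    linarith
  · have h := hη.2.2 (y - x) x
    have e : y - x + x = y := by abel
    rw [e] at h
    have e2 : η (y - x) = η (x - y) := by rw [← neg_sub x y, eta_neg hη]
    linarith

lemma eta_le_linf (hη : IsNorm η) (z : ℝ × ℝ) :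
    η z ≤ (η (1,0) + η (0,1)) * max |z.1| |z.2| := by
  have hz : z = z.1 • ((1:ℝ), (0:ℝ)) + z.2 • ((0:ℝ), (1:ℝ)) := by
    apply Prod.ext <;> simp
  have htri := hη.2.2 (z.1 • ((1:ℝ), (0:ℝ))) (z.2 • ((0:ℝ), (1:ℝ)))
  have h1 := hη.2.1 z.1 ((1:ℝ), (0:ℝ))
  have h2 := hη.2.1 z.2 ((0:ℝ), (1:ℝ))
  have hb1 : |z.1| * η (1,0) ≤ max |z.1| |z.2| * η (1,0) :=
    mul_le_mul_of_nonneg_right (le_max_left _ _) (eta_nonneg hη _)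
  have hb2 : |z.2| * η (0,1) ≤ max |z.1| |z.2| * η (0,1) :=
    mul_le_mul_of_nonneg_right (le_max_right _ _) (eta_nonneg hη _)
  calc η z = η (z.1 • ((1:ℝ), (0:ℝ)) + z.2 • ((0:ℝ), (1:ℝ))) := by rw [← hz]
    _ ≤ η (z.1 • ((1:ℝ), (0:ℝ))) + η (z.2 • ((0:ℝ), (1:ℝ))) := htri
    _ = |z.1| * η (1,0) + |z.2| * η (0,1) := by rw [h1, h2]
    _ ≤ max |z.1| |z.2| * η (1,0) + max |z.1| |z.2| * η (0,1) := by linarith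
    _ = (η (1,0) + η (0,1)) * max |z.1| |z.2| := by ring

lemma eta_continuous (hη : IsNorm η) : Continuous η := by
  have hMc0 : 0 ≤ η (1,0) + η (0,1) :=
    add_nonneg (eta_nonneg hη _) (eta_nonneg hη _)
  apply LipschitzWith.continuous (K := (η (1,0) + η (0,1)).toNNReal)
  apply LipschitzWith.of_dist_le_mul
  intro a b
  have h1 : dist (η a) (η b) = |η a - η b| := Real.dist_eq _ _
  have h2 := eta_abs_sub hη a b
  have h3 := eta_le_linf hη (a - b)
  have h4 : max |(a - b).1| |(a - b).2| = dist a b := by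
    rw [Prod.dist_eq, Real.dist_eq, Real.dist_eq]
    rfl
  have h5 : ((η (1,0) + η (0,1)).toNNReal : ℝ) = η (1,0) + η (0,1) :=
    Real.coe_toNNReal _ hMc0
  rw [h1, h5]
  calc |η a - η b| ≤ η (a - b) := h2
    _ ≤ (η (1,0) + η (0,1)) * max |(a - b).1| |(a - b).2| := h3
    _ = (η (1,0) + η (0,1)) * dist a b := by rw [h4]

lemma exists_cpos (hη : IsNorm η) :
    ∃ c : ℝ, 0 < c ∧ ∀ θ : ℝ, c ≤ η (Real.cos θ, Real.sin θ) := by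
  set S : Set (ℝ × ℝ) := {z | z.1 ^ 2 + z.2 ^ 2 = 1} with hSdef
  have hSne : S.Nonempty := ⟨(1, 0), by simp [hSdef]⟩
  have hSclosed : IsClosed S := by
    have : Continuous fun z : ℝ × ℝ => z.1 ^ 2 + z.2 ^ 2 := by fun_prop
    exact isClosed_eq this continuous_const
  have hSbdd : Bornology.IsBounded S := by
    apply Bornology.IsBounded.subset (Metric.isBounded_closedBall (x := (0 : ℝ × ℝ)) (r := 1))
    intro z hz
    have hz' : z.1 ^ 2 + z.2 ^ 2 = 1 := hz
    have h1 : |z.1| ≤ 1 := by nlinarith [sq_nonneg z.1, sq_nonneg z.2, abs_nonneg z.1, sq_abs z.1]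
    have h2 : |z.2| ≤ 1 := by nlinarith [sq_nonneg z.1, sq_nonneg z.2, abs_nonneg z.2, sq_abs z.2]
    simp only [Metric.mem_closedBall]
    rw [Prod.dist_eq, Real.dist_eq, Real.dist_eq]
    have e : z.1 - (0:(ℝ×ℝ)).1 = z.1 ∧ z.2 - (0:(ℝ×ℝ)).2 = z.2 := by
      constructor <;> simp
    rw [e.1, e.2]
    exact max_le h1 h2
  have hScomp : IsCompact S := Metric.isCompact_of_isClosed_isBounded hSclosed hSbdd
  obtain ⟨z0, hz0S, hz0min⟩ := hScomp.exists_isMinOn hSne (eta_continuous hη).continuousOn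
  refine ⟨η z0, ?_, ?_⟩
  · have hz0ne : z0 ≠ 0 := by
      intro h
      rw [h] at hz0S
      have : (0:ℝ) ^ 2 + (0:ℝ) ^ 2 = 1 := hz0S
      norm_num at this
    rcases (eta_nonneg hη z0).lt_or_eq with h | h
    · exact h
    · exact absurd ((hη.1 z0).mp h.symm) hz0ne
  · intro θ
    have hmem : ((Real.cos θ, Real.sin θ) : ℝ × ℝ) ∈ S := by
      simp only [hSdef, Set.mem_setOf_eq]
      exact Real.cos_sq_add_sin_sq θ
    exact hz0min hmem

lemma cos_lip (a b : ℝ) : |Real.cos a - Real.cos b| ≤ |a - b| := by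
  rw [Real.cos_sub_cos]
  have h1 : |Real.sin ((a - b) / 2)| ≤ |(a - b) / 2| := Real.abs_sin_le_abs
  have h2 : |Real.sin ((a + b) / 2)| ≤ 1 := Real.abs_sin_le_one _
  have h3 : |(a - b) / 2| = |a - b| / 2 := by rw [abs_div]; norm_num
  rw [abs_mul, abs_mul]
  have h4 : |(-2 : ℝ)| = 2 := by norm_num
  rw [h4]
  nlinarith [abs_nonneg (Real.sin ((a + b) / 2)), abs_nonneg (Real.sin ((a - b) / 2)),
    abs_nonneg (a - b)]

lemma sin_lip (a b : ℝ) : |Real.sin a - Real.sin b| ≤ |a - b| := by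
  rw [Real.sin_sub_sin]
  have h1 : |Real.sin ((a - b) / 2)| ≤ |(a - b) / 2| := Real.abs_sin_le_abs
  have h2 : |Real.cos ((a + b) / 2)| ≤ 1 := Real.abs_cos_le_one _
  have h3 : |(a - b) / 2| = |a - b| / 2 := by rw [abs_div]; norm_num
  rw [abs_mul, abs_mul]
  have h4 : |(2 : ℝ)| = 2 := by norm_num
  rw [h4]
  nlinarith [abs_nonneg (Real.cos ((a + b) / 2)), abs_nonneg (Real.sin ((a - b) / 2)),
    abs_nonneg (a - b)]

lemma unit_norm (hη : IsNorm η) {θ : ℝ} (h : 0 < η (Real.cos θ, Real.sin θ)) :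
    η (unitPoint η θ) = 1 := by
  unfold unitPoint
  rw [hη.2.1, abs_inv, abs_of_pos h, inv_mul_cancel₀ h.ne']

lemma exists_ulip (hη : IsNorm η) {c : ℝ} (hc : 0 < c)
    (hcle : ∀ θ : ℝ, c ≤ η (Real.cos θ, Real.sin θ)) :
    ∃ K : ℝ, 0 ≤ K ∧ ∀ a b : ℝ, η (unitPoint η a - unitPoint η b) ≤ K * |a - b| := by
  set Mc := η (1,0) + η (0,1) with hMcdef
  have hMc0 : 0 ≤ Mc := add_nonneg (eta_nonneg hη _) (eta_nonneg hη _)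
  refine ⟨Mc * c⁻¹ + Mc * Mc * (c⁻¹ * c⁻¹), by positivity, ?_⟩
  intro a b
  set ga : ℝ × ℝ := (Real.cos a, Real.sin a) with hgadef
  set gb : ℝ × ℝ := (Real.cos b, Real.sin b) with hgbdef
  have hfa : 0 < η ga := lt_of_lt_of_le hc (hcle a)
  have hfb : 0 < η gb := lt_of_lt_of_le hc (hcle b)
  have hgbM : η gb ≤ Mc := by
    have h1 : max |gb.1| |gb.2| ≤ 1 := by
      apply max_le
      · exact Real.abs_cos_le_one b
      · exact Real.abs_sin_le_one b
    calc η gb ≤ Mc * max |gb.1| |gb.2| := eta_le_linf hη gb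
      _ ≤ Mc * 1 := mul_le_mul_of_nonneg_left h1 hMc0
      _ = Mc := mul_one Mc
  have hgd : η (ga - gb) ≤ Mc * |a - b| := by
    have h1 : |(ga - gb).1| ≤ |a - b| := by
      have : (ga - gb).1 = Real.cos a - Real.cos b := rfl
      rw [this]; exact cos_lip a b
    have h2 : |(ga - gb).2| ≤ |a - b| := by
      have : (ga - gb).2 = Real.sin a - Real.sin b := rfl
      rw [this]; exact sin_lip a b
    calc η (ga - gb) ≤ Mc * max |(ga - gb).1| |(ga - gb).2| := eta_le_linf hη _
      _ ≤ Mc * |a - b| := mul_le_mul_of_nonneg_left (max_le h1 h2) hMc0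
  have hfd : |η ga - η gb| ≤ Mc * |a - b| := le_trans (eta_abs_sub hη _ _) hgd
  have hdec : unitPoint η a - unitPoint η b
      = (η ga)⁻¹ • (ga - gb) + ((η ga)⁻¹ - (η gb)⁻¹) • gb := by
    unfold unitPoint
    rw [smul_sub, sub_smul]
    abel
  rw [hdec]
  have htri := hη.2.2 ((η ga)⁻¹ • (ga - gb)) (((η ga)⁻¹ - (η gb)⁻¹) • gb)
  refine le_trans htri ?_
  rw [hη.2.1, hη.2.1]
  have e1 : |(η ga)⁻¹| = (η ga)⁻¹ := abs_of_pos (inv_pos.mpr hfa)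
  have hfainv : (η ga)⁻¹ ≤ c⁻¹ := inv_anti₀ hc (hcle a)
  have t1 : |(η ga)⁻¹| * η (ga - gb) ≤ c⁻¹ * (Mc * |a - b|) := by
    rw [e1]
    exact mul_le_mul hfainv hgd (eta_nonneg hη _) (by positivity)
  have e2 : |(η ga)⁻¹ - (η gb)⁻¹| ≤ c⁻¹ * c⁻¹ * (Mc * |a - b|) := by
    rw [inv_sub_inv hfa.ne' hfb.ne', abs_div, abs_of_pos (mul_pos hfa hfb), div_eq_mul_inv]
    have h1 : |η gb - η ga| ≤ Mc * |a - b| := by rw [abs_sub_comm]; exact hfd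
    have h2 : (η ga * η gb)⁻¹ ≤ (c * c)⁻¹ :=
      inv_anti₀ (mul_pos hc hc)
        (mul_le_mul (hcle a) (hcle b) (le_of_lt hc) (le_of_lt hfa))
    calc |η gb - η ga| * (η ga * η gb)⁻¹ ≤ (Mc * |a - b|) * (c * c)⁻¹ := by
          apply mul_le_mul h1 h2 (by positivity) (by positivity)
      _ = c⁻¹ * c⁻¹ * (Mc * |a - b|) := by rw [mul_inv]; ring
  have t2 : |(η ga)⁻¹ - (η gb)⁻¹| * η gb ≤ (c⁻¹ * c⁻¹ * (Mc * |a - b|)) * Mc :=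
    mul_le_mul e2 hgbM (eta_nonneg hη _) (by positivity)
  have efin : c⁻¹ * (Mc * |a - b|) + (c⁻¹ * c⁻¹ * (Mc * |a - b|)) * Mc
      = (Mc * c⁻¹ + Mc * Mc * (c⁻¹ * c⁻¹)) * |a - b| := by ring
  linarith


def VS (η : ℝ × ℝ → ℝ) (g : ℝ → ℝ × ℝ) (a b : ℝ) : Set ℝ :=
  { L : ℝ | ∃ (m : ℕ) (θ : ℕ → ℝ), Monotone θ ∧ θ 0 = a ∧ θ m = b ∧
    L = ∑ i ∈ Finset.range m, η (g (θ (i + 1)) - g (θ i)) }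

lemma etaVar_eq (g : ℝ → ℝ × ℝ) (a b : ℝ) : etaVar η g a b = sSup (VS η g a b) := rfl

lemma mem_VS_single (g : ℝ → ℝ × ℝ) {a b : ℝ} (hab : a ≤ b) :
    η (g b - g a) ∈ VS η g a b := by
  refine ⟨1, fun i => if i = 0 then a else b, ?_, by simp, by simp, by simp⟩
  apply monotone_nat_of_le_succ
  intro i
  cases i with
  | zero => simpa using hab
  | succ k => simp

lemma VS_le {g : ℝ → ℝ × ℝ} {K : ℝ}
    (hlip : ∀ x y : ℝ, η (g x - g y) ≤ K * |x - y|) {a b : ℝ} :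
    ∀ L ∈ VS η g a b, L ≤ K * (b - a) := by
  rintro L ⟨m, θ, hmono, h0, hm, rfl⟩
  calc (∑ i ∈ Finset.range m, η (g (θ (i + 1)) - g (θ i)))
      ≤ ∑ i ∈ Finset.range m, K * (θ (i + 1) - θ i) := by
        apply Finset.sum_le_sum
        intro i _
        have h1 := hlip (θ (i + 1)) (θ i)
        rwa [abs_of_nonneg (sub_nonneg.mpr (hmono (Nat.le_succ i)))] at h1
    _ = K * (θ m - θ 0) := by rw [← Finset.mul_sum, Finset.sum_range_sub]
    _ = K * (b - a) := by rw [h0, hm]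

lemma VS_bddAbove {g : ℝ → ℝ × ℝ} {K : ℝ}
    (hlip : ∀ x y : ℝ, η (g x - g y) ≤ K * |x - y|) (a b : ℝ) :
    BddAbove (VS η g a b) :=
  ⟨K * (b - a), fun _ hL => VS_le hlip _ hL⟩

lemma chord_le (hη : IsNorm η) {g : ℝ → ℝ × ℝ} {K : ℝ}
    (hlip : ∀ x y : ℝ, η (g x - g y) ≤ K * |x - y|) {a b : ℝ} (hab : a ≤ b) :
    η (g b - g a) ≤ etaVar η g a b :=
  le_csSup (VS_bddAbove hlip a b) (mem_VS_single g hab)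

lemma var_nonneg (hη : IsNorm η) {g : ℝ → ℝ × ℝ} {K : ℝ}
    (hlip : ∀ x y : ℝ, η (g x - g y) ≤ K * |x - y|) {a b : ℝ} (hab : a ≤ b) :
    0 ≤ etaVar η g a b :=
  le_trans (eta_nonneg hη _) (chord_le hη hlip hab)

lemma sum_range_add_aux (F : ℕ → ℝ) (m1 m2 : ℕ) :
    ∑ i ∈ Finset.range (m1 + m2), F i
      = (∑ i ∈ Finset.range m1, F i) + ∑ i ∈ Finset.range m2, F (m1 + i) := by
  rw [Finset.range_eq_Ico,
    ← Finset.sum_Ico_consecutive _ (Nat.zero_le m1) (Nat.le_add_right m1 m2),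
    Finset.sum_Ico_eq_sum_range (f := F) (m := m1) (n := m1 + m2),
    Nat.add_sub_cancel_left, ← Finset.range_eq_Ico]

lemma VS_combine {g : ℝ → ℝ × ℝ} {a b c : ℝ} :
    ∀ L1 ∈ VS η g a b, ∀ L2 ∈ VS η g b c, L1 + L2 ∈ VS η g a c := by
  rintro L1 ⟨m1, θ1, hmono1, h10, h1m, rfl⟩ L2 ⟨m2, θ2, hmono2, h20, h2m, rfl⟩
  refine ⟨m1 + m2, fun i => if i < m1 then θ1 i else θ2 (i - m1), ?_, ?_, ?_, ?_⟩
  · apply monotone_nat_of_le_succ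
    intro i
    by_cases h1 : i + 1 < m1
    · have h2 : i < m1 := by omega
      simp only [if_pos h1, if_pos h2]
      exact hmono1 (Nat.le_succ i)
    · by_cases h2 : i < m1
      · have h3 : i + 1 - m1 = 0 := by omega
        simp only [if_pos h2, if_neg h1, h3, h20]
        rw [← h1m]
        exact hmono1 (by omega)
      · simp only [if_neg h1, if_neg h2]
        apply hmono2
        omega
  · by_cases h : 0 < m1
    · simp only [if_pos h]; exact h10
    · have hm10 : m1 = 0 := by omega
      have hba : b = a := by rw [← h10, ← h1m, hm10]
      simp only [if_neg h]
      simp only [Nat.zero_sub, h20, hba]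
  · have hcond : ¬ (m1 + m2 < m1) := by omega
    have he : m1 + m2 - m1 = m2 := by omega
    simp only [if_neg hcond, he, h2m]
  · have hsplit := sum_range_add_aux
      (fun i => η (g ((fun j => if j < m1 then θ1 j else θ2 (j - m1)) (i + 1))
        - g ((fun j => if j < m1 then θ1 j else θ2 (j - m1)) i))) m1 m2
    rw [hsplit]
    congr 1
    · apply Finset.sum_congr rfl
      intro i hi
      have hi' : i < m1 := Finset.mem_range.mp hi
      have hψi : (if i < m1 then θ1 i else θ2 (i - m1)) = θ1 i := if_pos hi'
      have hψi1 : (if i + 1 < m1 then θ1 (i + 1) else θ2 (i + 1 - m1)) = θ1 (i + 1) := by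
        by_cases h : i + 1 < m1
        · exact if_pos h
        · have h3 : i + 1 - m1 = 0 := by omega
          have h4 : i + 1 = m1 := by omega
          rw [if_neg h, h3, h20, h4, h1m]
      simp only [hψi, hψi1]
    · apply Finset.sum_congr rfl
      intro i hi
      have hc1 : ¬ (m1 + i < m1) := by omega
      have hc2 : ¬ (m1 + i + 1 < m1) := by omega
      have he1 : m1 + i - m1 = i := by omega
      have he2 : m1 + i + 1 - m1 = i + 1 := by omega
      simp only [if_neg hc1, if_neg hc2, he1, he2]

lemma var_superadd (hη : IsNorm η) {g : ℝ → ℝ × ℝ} {K : ℝ}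
    (hlip : ∀ x y : ℝ, η (g x - g y) ≤ K * |x - y|) {a b c : ℝ}
    (hab : a ≤ b) (hbc : b ≤ c) :
    etaVar η g a b + etaVar η g b c ≤ etaVar η g a c := by
  have hbdd3 := VS_bddAbove (η := η) hlip a c
  have hne1 : (VS η g a b).Nonempty := ⟨_, mem_VS_single g hab⟩
  have hne2 : (VS η g b c).Nonempty := ⟨_, mem_VS_single g hbc⟩
  have h1 : etaVar η g a b ≤ sSup (VS η g a c) - etaVar η g b c := by
    rw [etaVar_eq]
    apply csSup_le hne1
    intro L1 hL1
    have h2 : etaVar η g b c ≤ sSup (VS η g a c) - L1 := by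
      rw [etaVar_eq]
      apply csSup_le hne2
      intro L2 hL2
      have h3 := le_csSup hbdd3 (VS_combine L1 hL1 L2 hL2)
      linarith
    linarith
  rw [etaVar_eq g a c]
  linarith


lemma pair_bound (hη : IsNorm η) {K : ℝ}
    (hlip : ∀ x y : ℝ, η (unitPoint η x - unitPoint η y) ≤ K * |x - y|)
    (hunit : ∀ θ : ℝ, η (unitPoint η θ) = 1)
    {α θ θ' t t' : ℝ} (hαθ : α ≤ θ) (hθ : θ ≤ θ') (ht : 0 ≤ t) (ht' : 0 ≤ t') :
    η (t • unitPoint η θ - t' • unitPoint η θ') ≤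
      |t - t'| + min t t' *
        |etaVar η (unitPoint η) α θ - etaVar η (unitPoint η) α θ'| := by
  set u : ℝ → ℝ × ℝ := unitPoint η with hu
  have hch : η (u θ' - u θ) ≤ etaVar η u θ θ' := chord_le hη hlip hθ
  have hsup : etaVar η u α θ + etaVar η u θ θ' ≤ etaVar η u α θ' :=
    var_superadd hη hlip hαθ hθ
  have hv0 : 0 ≤ etaVar η u θ θ' := var_nonneg hη hlip hθ
  have habs : |etaVar η u α θ - etaVar η u α θ'| = etaVar η u α θ' - etaVar η u α θ := by
    rw [abs_sub_comm]
    exact abs_of_nonneg (by linarith)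
  have hch2 : η (u θ' - u θ) ≤ |etaVar η u α θ - etaVar η u α θ'| := by
    rw [habs]; linarith
  have hflip : η (u θ - u θ') = η (u θ' - u θ) := by
    rw [← neg_sub (u θ') (u θ), eta_neg hη]
  rcases le_total t t' with h | h
  · have hmin : min t t' = t := min_eq_left h
    have hdec : t • u θ - t' • u θ' = t • (u θ - u θ') + (t - t') • u θ' := by
      rw [smul_sub, sub_smul]; abel
    rw [hdec]
    have htri := hη.2.2 (t • (u θ - u θ')) ((t - t') • u θ')
    refine le_trans htri ?_
    rw [hη.2.1, hη.2.1, hunit θ', mul_one, hmin]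
    have h2 : |t| * η (u θ - u θ') ≤ t * |etaVar η u α θ - etaVar η u α θ'| := by
      rw [abs_of_nonneg ht, hflip]
      exact mul_le_mul_of_nonneg_left hch2 ht
    linarith
  · have hmin : min t t' = t' := min_eq_right h
    have hdec : t • u θ - t' • u θ' = t' • (u θ - u θ') + (t - t') • u θ := by
      rw [smul_sub, sub_smul]; abel
    rw [hdec]
    have htri := hη.2.2 (t' • (u θ - u θ')) ((t - t') • u θ)
    refine le_trans htri ?_
    rw [hη.2.1, hη.2.1, hunit θ, mul_one, hmin]
    have h2 : |t'| * η (u θ - u θ') ≤ t' * |etaVar η u α θ - etaVar η u α θ'| := by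
      rw [abs_of_nonneg ht', hflip]
      exact mul_le_mul_of_nonneg_left hch2 ht'
    linarith


lemma exists_min_multiset {X : Type} (f : X → ℝ) :
    ∀ (M : Multiset X), M ≠ 0 → ∃ q ∈ M, ∀ p ∈ M, f q ≤ f p := by
  intro M
  induction M using Multiset.induction_on with
  | empty => intro h; exact absurd rfl h
  | cons a s IH =>
    intro _
    by_cases hs : s = 0
    · subst hs
      refine ⟨a, Multiset.mem_cons_self a 0, ?_⟩
      intro p hp
      rcases Multiset.mem_cons.mp hp with h | h
      · exact le_of_eq (congrArg f h.symm)
      · simp at h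
    · obtain ⟨q, hqmem, hqmin⟩ := IH hs
      rcases le_total (f a) (f q) with h | h
      · refine ⟨a, Multiset.mem_cons_self a s, ?_⟩
        intro p hp
        rcases Multiset.mem_cons.mp hp with hh | hh
        · exact le_of_eq (congrArg f hh.symm)
        · exact le_trans h (hqmin p hh)
      · refine ⟨q, Multiset.mem_cons_of_mem hqmem, ?_⟩
        intro p hp
        rcases Multiset.mem_cons.mp hp with hh | hh
        · rw [hh]; exact h
        · exact hqmin p hh

lemma core_lemma (η : ℝ × ℝ → ℝ) (B T : ℝ × ℝ → ℝ) (phi : ℝ)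
    (hphi : phi ^ 2 = phi + 1) (hphi1 : 3 / 2 ≤ phi) (hphi2 : phi < 2) :
    ∀ (n : ℕ) (M : Multiset (ℝ × ℝ)), M.card ≤ n →
    ∀ lo hi : ℝ, lo ≤ hi →
    (∀ p ∈ M, lo ≤ B p ∧ B p ≤ hi ∧ 0 ≤ T p ∧ T p ≤ 1) →
    (∀ p ∈ M, ∀ p' ∈ M, η (p - p') ≤ |T p - T p'| + min (T p) (T p') * |B p - B p'|) →
    ∃ Tr : BTree (ℝ × ℝ), Tr.labels = M ∧
      ∀ (s : ℝ × ℝ) (ts bs : ℝ), 0 ≤ ts → ts ≤ 1 →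
        (∀ p ∈ M, ts ≤ T p) →
        (∀ p ∈ M, η (p - s) ≤ (T p - ts) + ts * |bs - B p|) →
        makespan η s Tr ≤ (1 - ts) + phi * (hi - lo) + ts * max (|bs - lo|) (|bs - hi|) := by
  have nilcase : ∀ lo hi : ℝ, lo ≤ hi →
      ∀ (s : ℝ × ℝ) (ts bs : ℝ), 0 ≤ ts → ts ≤ 1 →
        makespan η s BTree.nil ≤ (1 - ts) + phi * (hi - lo) + ts * max (|bs - lo|) (|bs - hi|) := by
    intro lo hi hlohi s ts bs hts0 hts1
    have h1 : (0:ℝ) ≤ phi * (hi - lo) := mul_nonneg (by linarith) (by linarith)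
    have h2 : (0:ℝ) ≤ max (|bs - lo|) (|bs - hi|) :=
      le_trans (abs_nonneg _) (le_max_left _ _)
    have h3 : (0:ℝ) ≤ ts * max (|bs - lo|) (|bs - hi|) := mul_nonneg hts0 h2
    simp only [makespan]
    linarith
  intro n
  induction n with
  | zero =>
      intro M hcard lo hi hlohi _ _
      have hM : M = 0 := Multiset.card_eq_zero.mp (Nat.le_zero.mp hcard)
      subst hM
      exact ⟨BTree.nil, by simp [BTree.labels], fun s ts bs h0 h1 _ _ => nilcase lo hi hlohi s ts bs h0 h1⟩
  | succ n IH =>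
      intro M hcard lo hi hlohi hwin hpair
      by_cases hM : M = 0
      · subst hM
        exact ⟨BTree.nil, by simp [BTree.labels], fun s ts bs h0 h1 _ _ => nilcase lo hi hlohi s ts bs h0 h1⟩
      classical
      obtain ⟨q, hq, hqmin⟩ := exists_min_multiset T M hM
      obtain ⟨hqlo, hqhi, hqT0, hqT1⟩ := hwin q hq
      set v := hi - lo with hvdef
      have hv0 : 0 ≤ v := by simp only [hvdef]; linarith
      set x := (if B q ≤ lo + (phi - 1) * v then lo + (phi - 1) * v else lo + (2 - phi) * v) with hxdef
      obtain ⟨hx1, hx2, key1, key2⟩ :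
          lo ≤ x ∧ x ≤ hi ∧
          phi * (x - lo) + T q * max (|B q - lo|) (|B q - x|) ≤ phi * v ∧
          phi * (hi - x) + T q * max (|B q - x|) (|B q - hi|) ≤ phi * v := by
        have hhilo : hi = lo + v := by rw [hvdef]; ring
        have hv1 : 0 ≤ (phi - 1) * v := mul_nonneg (by linarith) hv0
        have hv3 : 0 ≤ (2 - phi) * v := mul_nonneg (by linarith) hv0
        have hv5 : 0 ≤ (2 * phi - 3) * v := mul_nonneg (by linarith) hv0
        have hv2 : (phi - 1) * v ≤ v := by nlinarith [hv3]
        have hv4 : (2 - phi) * v ≤ (phi - 1) * v := by nlinarith [hv5]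
        have hTv : T q * v ≤ v := by nlinarith [mul_le_mul_of_nonneg_right hqT1 hv0]
        have hTv1 : T q * ((phi - 1) * v) ≤ (phi - 1) * v := by
          nlinarith [mul_le_mul_of_nonneg_right hqT1 hv1]
        by_cases h : B q ≤ lo + (phi - 1) * v
        · rw [hxdef, if_pos h]
          have e1 : phi * ((lo + (phi - 1) * v) - lo) = v := by
            linear_combination v * hphi
          have e2 : phi * (hi - (lo + (phi - 1) * v)) = (phi - 1) * v := by
            linear_combination phi * hhilo - v * hphi
          have hm1 : max (|B q - lo|) (|B q - (lo + (phi - 1) * v)|) ≤ (phi - 1) * v := by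
            apply max_le
            · rw [abs_le]; constructor <;> linarith
            · rw [abs_le]; constructor <;> linarith
          have hm2 : max (|B q - (lo + (phi - 1) * v)|) (|B q - hi|) ≤ v := by
            apply max_le
            · rw [abs_le]; constructor <;> linarith
            · rw [abs_le]; constructor <;> linarith
          have hp1 := mul_le_mul_of_nonneg_left hm1 hqT0
          have hp2 := mul_le_mul_of_nonneg_left hm2 hqT0
          refine ⟨by linarith, by linarith, by linarith, by linarith⟩
        · rw [hxdef, if_neg h]
          push_neg at h
          have e1 : phi * ((lo + (2 - phi) * v) - lo) = (phi - 1) * v := by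
            linear_combination - v * hphi
          have e2 : phi * (hi - (lo + (2 - phi) * v)) = v := by
            linear_combination phi * hhilo + v * hphi
          have hm1 : max (|B q - lo|) (|B q - (lo + (2 - phi) * v)|) ≤ v := by
            apply max_le
            · rw [abs_le]; constructor <;> linarith
            · rw [abs_le]; constructor <;> linarith
          have hm2 : max (|B q - (lo + (2 - phi) * v)|) (|B q - hi|) ≤ (phi - 1) * v := by
            apply max_le
            · rw [abs_le]; constructor <;> linarith
            · rw [abs_le]; constructor <;> linarith
          have hp1 := mul_le_mul_of_nonneg_left hm1 hqT0
          have hp2 := mul_le_mul_of_nonneg_left hm2 hqT0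
          refine ⟨by linarith, by linarith, by linarith, by linarith⟩
      set M' := M.erase q with hM'def
      have hMeq : q ::ₘ M' = M := Multiset.cons_erase hq
      set M1 := M'.filter (fun p => B p ≤ x) with hM1def
      set M2 := M'.filter (fun p => ¬ (B p ≤ x)) with hM2def
      have hm1mem : ∀ p ∈ M1, p ∈ M := fun p hp =>
        Multiset.mem_of_mem_erase (Multiset.mem_of_mem_filter hp)
      have hm2mem : ∀ p ∈ M2, p ∈ M := fun p hp =>
        Multiset.mem_of_mem_erase (Multiset.mem_of_mem_filter hp)
      have hcard' : M'.card ≤ n := by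
        have h1 : M'.card = M.card - 1 := by
          rw [hM'def, Multiset.card_erase_of_mem hq, Nat.pred_eq_sub_one]
        omega
      have hcard1 : M1.card ≤ n :=
        le_trans (Multiset.card_le_card (Multiset.filter_le _ _)) hcard'
      have hcard2 : M2.card ≤ n :=
        le_trans (Multiset.card_le_card (Multiset.filter_le _ _)) hcard'
      obtain ⟨T1, hT1lab, hT1⟩ := IH M1 hcard1 lo x hx1
        (fun p hp => ⟨(hwin p (hm1mem p hp)).1, (Multiset.mem_filter.mp hp).2,
          (hwin p (hm1mem p hp)).2.2.1, (hwin p (hm1mem p hp)).2.2.2⟩)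
        (fun p hp p' hp' => hpair p (hm1mem p hp) p' (hm1mem p' hp'))
      obtain ⟨T2, hT2lab, hT2⟩ := IH M2 hcard2 x hi hx2
        (fun p hp => ⟨le_of_lt (not_le.mp (Multiset.mem_filter.mp hp).2),
          (hwin p (hm2mem p hp)).2.1,
          (hwin p (hm2mem p hp)).2.2.1, (hwin p (hm2mem p hp)).2.2.2⟩)
        (fun p hp p' hp' => hpair p (hm2mem p hp) p' (hm2mem p' hp'))
      refine ⟨BTree.node q T1 T2, ?_, ?_⟩
      · simp only [BTree.labels, hT1lab, hT2lab, hM1def, hM2def]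
        rw [Multiset.filter_add_not]
        exact hMeq
      · intro s ts bs hts0 hts1 htsmin hd
        have hdb : ∀ p ∈ M', η (p - q) ≤ (T p - T q) + T q * |B q - B p| := by
          intro p hp
          have hpM : p ∈ M := Multiset.mem_of_mem_erase hp
          have hp2 := hpair p hpM q hq
          have e1 : |T p - T q| = T p - T q :=
            abs_of_nonneg (sub_nonneg.mpr (hqmin p hpM))
          have e2 : min (T p) (T q) = T q := min_eq_right (hqmin p hpM)
          have e3 : |B p - B q| = |B q - B p| := abs_sub_comm _ _
          rw [e1, e2, e3] at hp2
          exact hp2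
        have hm1 := hT1 q (T q) (B q) hqT0 hqT1
          (fun p hp => hqmin p (hm1mem p hp))
          (fun p hp => hdb p (Multiset.mem_of_mem_filter hp))
        have hm2 := hT2 q (T q) (B q) hqT0 hqT1
          (fun p hp => hqmin p (hm2mem p hp))
          (fun p hp => hdb p (Multiset.mem_of_mem_filter hp))
        have hb1 : makespan η q T1 ≤ (1 - T q) + phi * v := by
          have : phi * (x - lo) + T q * max (|B q - lo|) (|B q - x|) ≤ phi * v := key1
          linarith
        have hb2 : makespan η q T2 ≤ (1 - T q) + phi * v := by linarith [key2, hm2]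
        have hqs : η (q - s) ≤ (T q - ts) + ts * |bs - B q| := hd q hq
        have hbs : |bs - B q| ≤ max (|bs - lo|) (|bs - hi|) := by
          rcases le_total bs (B q) with h | h
          · have h1 : |bs - B q| = B q - bs := by
              rw [abs_sub_comm]; exact abs_of_nonneg (by linarith)
            have h2 : hi - bs ≤ |bs - hi| := by
              rw [abs_sub_comm]; exact le_trans (le_abs_self _) le_rfl
            have h3 : |bs - B q| ≤ |bs - hi| := by rw [h1]; linarith
            exact le_trans h3 (le_max_right _ _)
          · have h1 : |bs - B q| = bs - B q := abs_of_nonneg (by linarith)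
            have h2 : bs - lo ≤ |bs - lo| := le_abs_self _
            have h3 : |bs - B q| ≤ |bs - lo| := by rw [h1]; linarith
            exact le_trans h3 (le_max_left _ _)
        have hexp : makespan η s (BTree.node q T1 T2)
            = η (q - s) + max (makespan η q T1) (makespan η q T2) := rfl
        rw [hexp]
        have hmax : max (makespan η q T1) (makespan η q T2) ≤ (1 - T q) + phi * v :=
          max_le hb1 hb2
        have hts : ts * |bs - B q| ≤ ts * max (|bs - lo|) (|bs - hi|) :=
          mul_le_mul_of_nonneg_left hbs hts0
        linarith


end FTPAux

/-- Split-Cone-Strategy bound: if a finite set of points lies in a cone of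
arc-length `w ∈ [0, 2π(η))` with apex at the origin, then there is a wake-up tree rooted at
the origin of makespan at most `1 + φ·w`, where `φ = (1+√5)/2`. -/
theorem ftp_cone_split_strategy (η : ℝ × ℝ → ℝ) (hη : IsNorm η) (α w : ℝ)
    (hw0 : 0 ≤ w) (hw : w < 2 * piEta η)
    (ps : List (ℝ × ℝ)) (hin : ∀ p ∈ ps, p ∈ cone η α w) :
    ∃ T : BTree (ℝ × ℝ), T.labels = ↑ps ∧
      makespan η 0 T ≤ 1 + (1 + Real.sqrt 5) / 2 * w := by
  classical
  obtain ⟨c, hc, hcle⟩ := FTPAux.exists_cpos hη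
  obtain ⟨K, hK0, hKlip⟩ := FTPAux.exists_ulip hη hc hcle
  have hunit : ∀ θ : ℝ, η (unitPoint η θ) = 1 :=
    fun θ => FTPAux.unit_norm hη (lt_of_lt_of_le hc (hcle θ))
  -- golden ratio facts
  have h5 : Real.sqrt 5 ^ 2 = 5 := Real.sq_sqrt (by norm_num)
  have hs0 : 0 ≤ Real.sqrt 5 := Real.sqrt_nonneg 5
  have hs2 : 2 ≤ Real.sqrt 5 := by nlinarith
  have hs3 : Real.sqrt 5 < 3 := by nlinarith
  set phi : ℝ := (1 + Real.sqrt 5) / 2 with hphidef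
  have hphi : phi ^ 2 = phi + 1 := by
    rw [hphidef]
    linear_combination (1/4 : ℝ) * h5
  have hphi1 : 3 / 2 ≤ phi := by rw [hphidef]; linarith
  have hphi2 : phi < 2 := by rw [hphidef]; linarith
  -- choice of data for each point
  let D : ℝ × ℝ → Prop := fun p => ∃ θt : ℝ × ℝ, α ≤ θt.1 ∧
    etaVar η (unitPoint η) α θt.1 ≤ w ∧ 0 ≤ θt.2 ∧ θt.2 ≤ 1 ∧
    p = θt.2 • unitPoint η θt.1
  have hex : ∀ p ∈ ps, D p := by
    intro p hp
    obtain ⟨θ, t, h1, h2, h3, h4, h5'⟩ := hin p hp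
    exact ⟨(θ, t), h1, h2, h3, h4, h5'⟩
  let F : ℝ × ℝ → ℝ × ℝ := fun p => if h : D p then h.choose else (α, 0)
  let B : ℝ × ℝ → ℝ := fun p => etaVar η (unitPoint η) α (F p).1
  let T : ℝ × ℝ → ℝ := fun p => (F p).2
  have hdata : ∀ p ∈ ps, α ≤ (F p).1 ∧ etaVar η (unitPoint η) α (F p).1 ≤ w ∧
      0 ≤ (F p).2 ∧ (F p).2 ≤ 1 ∧ p = (F p).2 • unitPoint η (F p).1 := by
    intro p hp
    have h := hex p hp
    simp only [F, dif_pos h]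
    exact h.choose_spec
  have hwin : ∀ p ∈ (↑ps : Multiset (ℝ × ℝ)), 0 ≤ B p ∧ B p ≤ w ∧ 0 ≤ T p ∧ T p ≤ 1 := by
    intro p hp
    obtain ⟨h1, h2, h3, h4, _⟩ := hdata p (by exact_mod_cast hp)
    exact ⟨FTPAux.var_nonneg hη hKlip h1, h2, h3, h4⟩
  have hpair : ∀ p ∈ (↑ps : Multiset (ℝ × ℝ)), ∀ p' ∈ (↑ps : Multiset (ℝ × ℝ)),
      η (p - p') ≤ |T p - T p'| + min (T p) (T p') * |B p - B p'| := by
    intro p hp p' hp'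
    obtain ⟨h1, h2, h3, h4, h5p⟩ := hdata p (by exact_mod_cast hp)
    obtain ⟨h1', h2', h3', h4', h5p'⟩ := hdata p' (by exact_mod_cast hp')
    rcases le_total ((F p).1) ((F p').1) with hle | hle
    · calc η (p - p') = η ((F p).2 • unitPoint η (F p).1 - (F p').2 • unitPoint η (F p').1) := by
            rw [← h5p, ← h5p']
        _ ≤ |T p - T p'| + min (T p) (T p') * |B p - B p'| :=
            FTPAux.pair_bound hη hKlip hunit h1 hle h3 h3'
    · have hsym := FTPAux.pair_bound hη hKlip hunit h1' hle h3' h3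
      calc η (p - p') = η (p' - p) := by rw [← neg_sub p' p, FTPAux.eta_neg hη]
        _ = η ((F p').2 • unitPoint η (F p').1 - (F p).2 • unitPoint η (F p).1) := by
            rw [← h5p, ← h5p']
        _ ≤ |T p' - T p| + min (T p') (T p) * |B p' - B p| := hsym
        _ = |T p - T p'| + min (T p) (T p') * |B p - B p'| := by
            rw [abs_sub_comm (T p') (T p), min_comm (T p') (T p), abs_sub_comm (B p') (B p)]
  obtain ⟨Tr, hlab, hms⟩ := FTPAux.core_lemma η B T phi hphi hphi1 hphi2
    ps.length (↑ps) (by simp) 0 w hw0 hwin hpair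
  refine ⟨Tr, hlab, ?_⟩
  have hnormp : ∀ p ∈ (↑ps : Multiset (ℝ × ℝ)), η p = T p := by
    intro p hp
    obtain ⟨h1, h2, h3, h4, h5p⟩ := hdata p (by exact_mod_cast hp)
    have e := hη.2.1 (F p).2 (unitPoint η (F p).1)
    rw [← h5p] at e
    rw [e, hunit, abs_of_nonneg h3, mul_one]
  have hfinal := hms 0 0 0 le_rfl (by norm_num)
    (fun p hp => (hwin p hp).2.2.1)
    (fun p hp => by
      rw [sub_zero, hnormp p hp]
      simp)
  have e : (1 : ℝ) - 0 + phi * (w - 0) + 0 * max (|0 - 0|) (|0 - w|) = 1 + phi * w := by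
    ring
  rw [e] at hfinal
  exact hfinal
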